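/- arXiv:1108.3199 — 4 statements merged into one kernel-verified Lean document; each statement's English description precedes it below -/
import Mathlib

section
/- Let U be a real vector space and let C be a complex vector subspace of the complexification U^ℂ = ℂ ⊗_ℝ U such that C ∩ C̄ = {0} and C + C̄ = U^ℂ. Then there exists a unique ℝ-linear map J : U → U with J ∘ J = −id_U such that C is the −i eigenspace of the complexified map J^ℂ := id_ℂ ⊗ J, i.e. C = {w ∈ U^ℂ : J^ℂ(w) = −i·w}. -/
open TensorProduct

/-- Conjugation on the complexification `ℂ ⊗[ℝ] U`, determined by `z ⊗ u ↦ z̄ ⊗ u`. -/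
noncomputable def complexificationConj (U : Type*) [AddCommGroup U] [Module ℝ U] :
    (ℂ ⊗[ℝ] U) →ₗ[ℝ] (ℂ ⊗[ℝ] U) :=
  LinearMap.rTensor U Complex.conjAe.toLinearMap

/-!
The subspaces `C` and `C̄` are complementary, so there is a unique `ℂ`-linear map `K` on `U^ℂ`
acting as `-i` on `C` and as `i` on `C̄`. Conjugation is antilinear and swaps `C` and `C̄`, hence
commutes with `K`; a `ℂ`-linear map commuting with conjugation preserves the real points `1 ⊗ U`
and is therefore the complexification of a real map `J`, and `K² = -1` gives `J² = -1`.
Conversely, for any admissible `J'` the map `J'^ℂ` is `-i` on `C` and, commuting with conjugation,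
`i` on `C̄`, so `J'^ℂ = K`.
-/

section Complexification

variable {U V : Type*} [AddCommGroup U] [Module ℝ U] [AddCommGroup V] [Module ℝ V]

@[simp]
lemma complexificationConj_tmul (z : ℂ) (u : U) :
    complexificationConj U (z ⊗ₜ u) = (starRingEnd ℂ) z ⊗ₜ u := by
  simp [complexificationConj]

@[simp]
lemma complexificationConj_complexificationConj (w : ℂ ⊗[ℝ] U) :
    complexificationConj U (complexificationConj U w) = w := by
  induction w using TensorProduct.induction_on with
  | zero => simp
  | tmul z u => simp
  | add a b ha hb => simp only [map_add, ha, hb]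

lemma complexificationConj_smul (z : ℂ) (w : ℂ ⊗[ℝ] U) :
    complexificationConj U (z • w) = (starRingEnd ℂ) z • complexificationConj U w := by
  induction w using TensorProduct.induction_on with
  | zero => simp
  | tmul z' u => simp [smul_tmul']
  | add a b ha hb => simp only [smul_add, map_add, ha, hb]

variable (U) in
noncomputable def complexificationConjₛₗ : (ℂ ⊗[ℝ] U) →ₗ⋆[ℂ] (ℂ ⊗[ℝ] U) where
  toFun := complexificationConj U
  map_add' := map_add _
  map_smul' := complexificationConj_smul

@[simp]
lemma complexificationConjₛₗ_apply (w : ℂ ⊗[ℝ] U) :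
    complexificationConjₛₗ U w = complexificationConj U w :=
  rfl

lemma complexificationConj_baseChange (J : U →ₗ[ℝ] V) (w : ℂ ⊗[ℝ] U) :
    complexificationConj V (J.baseChange ℂ w) = J.baseChange ℂ (complexificationConj U w) := by
  induction w using TensorProduct.induction_on with
  | zero => simp
  | tmul z u => simp
  | add a b ha hb => simp only [map_add, ha, hb]

variable (U) in
noncomputable def complexificationRe : (ℂ ⊗[ℝ] U) →ₗ[ℝ] U :=
  (TensorProduct.lid ℝ U).toLinearMap ∘ₗ LinearMap.rTensor U Complex.reLm

@[simp]
lemma complexificationRe_tmul (z : ℂ) (u : U) : complexificationRe U (z ⊗ₜ u) = z.re • u := by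
  simp [complexificationRe]

lemma add_complexificationConj (w : ℂ ⊗[ℝ] U) :
    w + complexificationConj U w = (1 : ℂ) ⊗ₜ ((2 : ℝ) • complexificationRe U w) := by
  induction w using TensorProduct.induction_on with
  | zero => simp
  | tmul z u =>
    rw [complexificationConj_tmul, complexificationRe_tmul, ← add_tmul, Complex.add_conj,
      smul_smul, tmul_smul, smul_tmul', Complex.real_smul, mul_one]
  | add a b ha hb =>
    rw [map_add, add_add_add_comm, ha, hb, map_add, smul_add, tmul_add]

lemma eq_one_tmul_complexificationRe_of_conj_eq {w : ℂ ⊗[ℝ] U}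
    (hw : complexificationConj U w = w) : w = (1 : ℂ) ⊗ₜ complexificationRe U w := by
  have h := add_complexificationConj w
  rw [hw, ← two_smul ℝ, tmul_smul] at h
  exact smul_right_injective _ two_ne_zero h

lemma baseChange_complex_injective :
    Function.Injective (fun J : U →ₗ[ℝ] V => J.baseChange ℂ) := by
  intro J J' h
  ext u
  simpa using congr(complexificationRe V ($h ((1 : ℂ) ⊗ₜ u)))

lemma exists_baseChange_eq_of_commute_conj (K : (ℂ ⊗[ℝ] U) →ₗ[ℂ] (ℂ ⊗[ℝ] V))
    (hK : ∀ w, complexificationConj V (K w) = K (complexificationConj U w)) :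
    ∃ J : U →ₗ[ℝ] V, J.baseChange ℂ = K := by
  refine ⟨complexificationRe V ∘ₗ K.restrictScalars ℝ ∘ₗ TensorProduct.mk ℝ ℂ U 1, ?_⟩
  ext u
  have hreal : complexificationConj V (K (1 ⊗ₜ u)) = K (1 ⊗ₜ u) := by
    rw [hK, complexificationConj_tmul, map_one]
  simpa using (eq_one_tmul_complexificationRe_of_conj_eq hreal).symm

end Complexification

section ConjugateComplement

variable {U : Type*} [AddCommGroup U] [Module ℝ U] (C : Submodule ℂ (ℂ ⊗[ℝ] U))

noncomputable def conjSubmodule : Submodule ℂ (ℂ ⊗[ℝ] U) :=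
  C.map (complexificationConjₛₗ U)

lemma restrictScalars_conjSubmodule :
    (conjSubmodule C).restrictScalars ℝ = (C.restrictScalars ℝ).map (complexificationConj U) :=
  rfl

lemma conj_mem_conjSubmodule {w : ℂ ⊗[ℝ] U} (hw : w ∈ C) :
    complexificationConj U w ∈ conjSubmodule C :=
  Submodule.mem_map_of_mem hw

lemma isCompl_conjSubmodule
    (hint : C.restrictScalars ℝ ⊓ (C.restrictScalars ℝ).map (complexificationConj U) = ⊥)
    (hsum : C.restrictScalars ℝ ⊔ (C.restrictScalars ℝ).map (complexificationConj U) = ⊤) :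
    IsCompl C (conjSubmodule C) := by
  rw [← restrictScalars_conjSubmodule, ← Submodule.restrictScalars_inf,
    Submodule.restrictScalars_eq_bot_iff] at hint
  rw [← restrictScalars_conjSubmodule, ← Submodule.restrictScalars_sup,
    Submodule.restrictScalars_eq_top_iff] at hsum
  exact ⟨disjoint_iff.2 hint, codisjoint_iff.2 hsum⟩

variable {C} (h : IsCompl C (conjSubmodule C))
include h

lemma ext_of_isCompl_conjSubmodule {F : Type*} [AddCommGroup F] [Module ℂ F]
    {f g : (ℂ ⊗[ℝ] U) →ₗ[ℂ] F} (hC : ∀ w ∈ C, f w = g w)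
    (hconj : ∀ w ∈ C, f (complexificationConj U w) = g (complexificationConj U w)) : f = g := by
  refine LinearMap.ext_on_codisjoint h.codisjoint hC ?_
  rintro _ ⟨w, hw, rfl⟩
  exact hconj w hw

noncomputable def complexStructureOfIsCompl : (ℂ ⊗[ℝ] U) →ₗ[ℂ] (ℂ ⊗[ℝ] U) :=
  LinearMap.ofIsCompl h ((-Complex.I) • C.subtype) (Complex.I • (conjSubmodule C).subtype)

lemma complexStructureOfIsCompl_apply_of_mem {w : ℂ ⊗[ℝ] U} (hw : w ∈ C) :
    complexStructureOfIsCompl h w = (-Complex.I) • w :=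
  LinearMap.ofIsCompl_apply_left h ⟨w, hw⟩

lemma complexStructureOfIsCompl_apply_conj {w : ℂ ⊗[ℝ] U} (hw : w ∈ C) :
    complexStructureOfIsCompl h (complexificationConj U w) =
      Complex.I • complexificationConj U w :=
  LinearMap.ofIsCompl_apply_right h ⟨_, conj_mem_conjSubmodule C hw⟩

lemma eq_complexStructureOfIsCompl {L : (ℂ ⊗[ℝ] U) →ₗ[ℂ] (ℂ ⊗[ℝ] U)}
    (hC : ∀ w ∈ C, L w = (-Complex.I) • w)
    (hconj : ∀ w ∈ C, L (complexificationConj U w) = Complex.I • complexificationConj U w) :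
    L = complexStructureOfIsCompl h :=
  ext_of_isCompl_conjSubmodule h
    (fun w hw => by rw [hC w hw, complexStructureOfIsCompl_apply_of_mem h hw])
    (fun w hw => by rw [hconj w hw, complexStructureOfIsCompl_apply_conj h hw])

lemma complexStructureOfIsCompl_comp_self :
    complexStructureOfIsCompl h ∘ₗ complexStructureOfIsCompl h = -LinearMap.id := by
  refine ext_of_isCompl_conjSubmodule h (fun w hw => ?_) (fun w hw => ?_)
  · rw [LinearMap.comp_apply, complexStructureOfIsCompl_apply_of_mem h hw, map_smul,
      complexStructureOfIsCompl_apply_of_mem h hw, smul_smul]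
    simp
  · rw [LinearMap.comp_apply, complexStructureOfIsCompl_apply_conj h hw, map_smul,
      complexStructureOfIsCompl_apply_conj h hw, smul_smul]
    simp

lemma complexificationConj_complexStructureOfIsCompl (w : ℂ ⊗[ℝ] U) :
    complexificationConj U (complexStructureOfIsCompl h w) =
      complexStructureOfIsCompl h (complexificationConj U w) := by
  have hL : (complexificationConjₛₗ U).comp
      ((complexStructureOfIsCompl h).comp (complexificationConjₛₗ U)) =
      complexStructureOfIsCompl h := by
    refine eq_complexStructureOfIsCompl h (fun v hv => ?_) (fun v hv => ?_)
    · simp [complexStructureOfIsCompl_apply_conj h hv]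
    · simp [complexStructureOfIsCompl_apply_of_mem h hv, complexificationConj_smul]
  simpa using congr($hL (complexificationConj U w))

lemma mem_iff_complexStructureOfIsCompl_apply (w : ℂ ⊗[ℝ] U) :
    w ∈ C ↔ complexStructureOfIsCompl h w = (-Complex.I) • w := by
  refine ⟨complexStructureOfIsCompl_apply_of_mem h, fun hw => ?_⟩
  obtain ⟨⟨a, ha⟩, ⟨_, c, hc, rfl⟩, rfl, -⟩ := Submodule.existsUnique_add_of_isCompl h w
  simp only [complexificationConjₛₗ_apply] at hw ⊢
  rw [map_add, complexStructureOfIsCompl_apply_of_mem h ha,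
    complexStructureOfIsCompl_apply_conj h hc, smul_add, add_right_inj] at hw
  have hzero : (2 * Complex.I) • complexificationConj U c = 0 := by
    rw [two_mul, add_smul]
    nth_rewrite 1 [hw]
    rw [neg_smul, neg_add_cancel]
  rw [(smul_eq_zero.1 hzero).resolve_left (by simp), add_zero]
  exact ha

end ConjugateComplement

/-- If `C` is a complex subspace of the complexification `U^ℂ = ℂ ⊗[ℝ] U` with
`C ∩ C̄ = {0}` and `C + C̄ = U^ℂ`, then there is a unique linear complex structure
`J` on `U` whose complexification has `C` as its `−i` eigenspace. -/
theorem unique_complex_structure_of_cr_cocr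
    (U : Type*) [AddCommGroup U] [Module ℝ U]
    (C : Submodule ℂ (ℂ ⊗[ℝ] U))
    (hint : C.restrictScalars ℝ ⊓ (C.restrictScalars ℝ).map (complexificationConj U) = ⊥)
    (hsum : C.restrictScalars ℝ ⊔ (C.restrictScalars ℝ).map (complexificationConj U) = ⊤) :
    ∃! J : U →ₗ[ℝ] U, J ∘ₗ J = -LinearMap.id ∧
      ∀ w : ℂ ⊗[ℝ] U, w ∈ C ↔ LinearMap.lTensor ℂ J w = (-Complex.I) • w := by
  have hC := isCompl_conjSubmodule C hint hsum
  obtain ⟨J, hJ⟩ := exists_baseChange_eq_of_commute_conj _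
    (complexificationConj_complexStructureOfIsCompl hC)
  refine ⟨J, ⟨baseChange_complex_injective ?_, fun w => ?_⟩,
    fun J' ⟨_, hJ'⟩ => baseChange_complex_injective ?_⟩
  · simp only [LinearMap.baseChange_comp, hJ, complexStructureOfIsCompl_comp_self,
      LinearMap.baseChange_neg, LinearMap.baseChange_id]
  · rw [← LinearMap.baseChange_eq_ltensor, hJ]
    exact mem_iff_complexStructureOfIsCompl_apply hC w
  · have hJ'C (w) (hw : w ∈ C) : J'.baseChange ℂ w = (-Complex.I) • w := by
      rw [LinearMap.baseChange_eq_ltensor]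
      exact (hJ' w).1 hw
    simp only [hJ]
    refine eq_complexStructureOfIsCompl hC hJ'C (fun w hw => ?_)
    rw [← complexificationConj_baseChange, hJ'C w hw, complexificationConj_smul]
    simp
end

section
/- Let U be a real vector space and let (E, ι) and (E', ι') be CR pairs for U inducing the same linear CR structure, i.e. ker α_{(E,ι)} = ker α_{(E',ι')}. Then there exists a ℂ-linear isomorphism φ : E → E' with φ ∘ ι = ι'; that is, the CR pair realizing a given linear CR structure is unique up to complex linear isomorphism. -/
/-! Since `ι(U) + i ι(U) = E`, the map `α` is onto, so `E` and likewise `E'` are both the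
quotient of `ℂ ⊗[ℝ] U` by the common kernel, compatibly with `1 ⊗ u ↦ ι u` and `1 ⊗ u ↦ ι' u`. -/

open TensorProduct

theorem LinearMap.exists_linearEquiv_apply_eq_of_ker_eq {R M N P : Type*} [Ring R]
    [AddCommGroup M] [Module R M] [AddCommGroup N] [Module R N] [AddCommGroup P] [Module R P]
    {f : M →ₗ[R] N} {g : M →ₗ[R] P} (hf : Function.Surjective f) (hg : Function.Surjective g)
    (h : ker f = ker g) : ∃ e : N ≃ₗ[R] P, ∀ x, e (f x) = g x := by
  refine ⟨(f.quotKerEquivOfSurjective hf).symm ≪≫ₗ Submodule.quotEquivOfEq _ _ h ≪≫ₗ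
    g.quotKerEquivOfSurjective hg, fun x => ?_⟩
  have hfx : (f.quotKerEquivOfSurjective hf).symm (f x) = Submodule.Quotient.mk x :=
    (LinearEquiv.symm_apply_eq _).mpr rfl
  simp only [LinearEquiv.trans_apply, hfx]
  rfl

section CRPair

variable {U E : Type*} [AddCommGroup U] [Module ℝ U]
  [AddCommGroup E] [Module ℂ E] [Module ℝ E]

theorem apply_tmul_of_apply_one_tmul {ι : U →ₗ[ℝ] E} {α : (ℂ ⊗[ℝ] U) →ₗ[ℂ] E}
    (hα : ∀ u, α ((1 : ℂ) ⊗ₜ[ℝ] u) = ι u) (z : ℂ) (u : U) : α (z ⊗ₜ[ℝ] u) = z • ι u := by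
  rw [← hα, ← map_smul, TensorProduct.smul_tmul', smul_eq_mul, mul_one]

theorem surjective_of_apply_one_tmul [IsScalarTower ℝ ℂ E] {ι : U →ₗ[ℝ] E}
    (hsum : LinearMap.range ι ⊔ (LinearMap.range ι).map
        ((Complex.I • (LinearMap.id : E →ₗ[ℂ] E)).restrictScalars ℝ) = ⊤)
    {α : (ℂ ⊗[ℝ] U) →ₗ[ℂ] E} (hα : ∀ u, α ((1 : ℂ) ⊗ₜ[ℝ] u) = ι u) :
    Function.Surjective α := by
  intro x
  obtain ⟨_, ⟨u, rfl⟩, _, ⟨_, ⟨v, rfl⟩, rfl⟩, rfl⟩ :=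
    Submodule.mem_sup.mp (hsum ▸ Submodule.mem_top : x ∈ _)
  refine ⟨(1 : ℂ) ⊗ₜ[ℝ] u + Complex.I ⊗ₜ[ℝ] v, ?_⟩
  simp [apply_tmul_of_apply_one_tmul hα]

end CRPair

theorem cr_pair_unique_up_to_iso_general
    (U : Type*) [AddCommGroup U] [Module ℝ U]
    (E : Type*) [AddCommGroup E] [Module ℂ E] [Module ℝ E] [IsScalarTower ℝ ℂ E]
    (E' : Type*) [AddCommGroup E'] [Module ℂ E'] [Module ℝ E'] [IsScalarTower ℝ ℂ E']
    (ι : U →ₗ[ℝ] E)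
    (hsum : LinearMap.range ι ⊔ (LinearMap.range ι).map
        ((Complex.I • (LinearMap.id : E →ₗ[ℂ] E)).restrictScalars ℝ) = ⊤)
    (ι' : U →ₗ[ℝ] E')
    (hsum' : LinearMap.range ι' ⊔ (LinearMap.range ι').map
        ((Complex.I • (LinearMap.id : E' →ₗ[ℂ] E')).restrictScalars ℝ) = ⊤)
    (α : (ℂ ⊗[ℝ] U) →ₗ[ℂ] E) (hα : ∀ u : U, α ((1 : ℂ) ⊗ₜ[ℝ] u) = ι u)
    (α' : (ℂ ⊗[ℝ] U) →ₗ[ℂ] E') (hα' : ∀ u : U, α' ((1 : ℂ) ⊗ₜ[ℝ] u) = ι' u)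
    (hker : LinearMap.ker α = LinearMap.ker α') :
    ∃ φ : E ≃ₗ[ℂ] E', ∀ u : U, φ (ι u) = ι' u := by
  obtain ⟨φ, hφ⟩ := LinearMap.exists_linearEquiv_apply_eq_of_ker_eq
    (surjective_of_apply_one_tmul hsum hα) (surjective_of_apply_one_tmul hsum' hα') hker
  exact ⟨φ, fun u => by rw [← hα, hφ, hα']⟩

/-- If `(E, ι)` and `(E', ι')` are CR pairs for the real vector space `U` inducing the
same linear CR structure (i.e. the induced complex-linear maps
`α : ℂ ⊗[ℝ] U → E` and `α' : ℂ ⊗[ℝ] U → E'` have the same kernel), then there is a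
complex-linear isomorphism `φ : E ≃ E'` with `φ ∘ ι = ι'`. -/
theorem cr_pair_unique_up_to_iso
    (U : Type*) [AddCommGroup U] [Module ℝ U]
    (E : Type*) [AddCommGroup E] [Module ℂ E] [Module ℝ E] [IsScalarTower ℝ ℂ E]
    (E' : Type*) [AddCommGroup E'] [Module ℂ E'] [Module ℝ E'] [IsScalarTower ℝ ℂ E']
    (ι : U →ₗ[ℝ] E) (hinj : Function.Injective ι)
    (hsum : LinearMap.range ι ⊔ (LinearMap.range ι).map
        ((Complex.I • (LinearMap.id : E →ₗ[ℂ] E)).restrictScalars ℝ) = ⊤)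
    (ι' : U →ₗ[ℝ] E') (hinj' : Function.Injective ι')
    (hsum' : LinearMap.range ι' ⊔ (LinearMap.range ι').map
        ((Complex.I • (LinearMap.id : E' →ₗ[ℂ] E')).restrictScalars ℝ) = ⊤)
    (α : (ℂ ⊗[ℝ] U) →ₗ[ℂ] E) (hα : ∀ u : U, α ((1 : ℂ) ⊗ₜ[ℝ] u) = ι u)
    (α' : (ℂ ⊗[ℝ] U) →ₗ[ℂ] E') (hα' : ∀ u : U, α' ((1 : ℂ) ⊗ₜ[ℝ] u) = ι' u)
    (hker : LinearMap.ker α = LinearMap.ker α') :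
    ∃ φ : E ≃ₗ[ℂ] E', ∀ u : U, φ (ι u) = ι' u :=
  cr_pair_unique_up_to_iso_general U E E' ι hsum ι' hsum' α hα α' hα' hker
end

section
/- Let k ≥ 1, let E be a (left) ℍ-module of real dimension 4k, and let U ⊆ E be a real vector subspace of dimension 4k − 1 (a real hyperplane). Then for every purely imaginary q ∈ ℍ with ‖q‖ = 1, one has U + q • U = E; that is, (U, E) is a CR quaternionic vector space. (This is the linear fact underlying the statement that every real hypersurface of a quaternionic manifold inherits a CR quaternionic structure, and Corollary 3.5.) -/
open Quaternion Module

/-!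
If `U ⊔ q • U` is not all of `E`, then, `U` being a hyperplane, `q • U ⊆ U`. Since `q² = -1`,
left multiplication by `q` then restricts to a complex structure on `U`, forcing `dim U` to be
even, whereas `dim U = 4k - 1` is odd.
-/

theorem Quaternion.mul_self_eq_neg_one_of_re_eq_zero_of_norm_eq_one {q : ℍ[ℝ]} (hre : q.re = 0)
    (hnorm : ‖q‖ = 1) : q * q = -1 := by
  rw [← sq, sq_eq_neg_normSq.mpr hre, normSq_eq_norm_mul_self, hnorm, mul_one, coe_one]

section ComplexStructure

variable {K V : Type*} [Field K] [LinearOrder K] [IsStrictOrderedRing K]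
  [AddCommGroup V] [Module K V]

theorem LinearMap.even_finrank_of_mul_self_eq_neg_one {J : V →ₗ[K] V} (hJ : J * J = -1) :
    Even (finrank K V) := by
  have hdet : LinearMap.det J * LinearMap.det J = (-1) ^ finrank K V := by
    rw [← map_mul, hJ, ← neg_one_smul K (1 : V →ₗ[K] V), LinearMap.det_smul, map_one, mul_one]
  refine (Nat.even_or_odd _).resolve_right fun hodd => ?_
  rw [hodd.neg_one_pow] at hdet
  linarith [mul_self_nonneg (LinearMap.det J)]

theorem Submodule.even_finrank_of_map_le {J : V →ₗ[K] V} (hJ : J * J = -1)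
    {U : Submodule K V} (hU : U.map J ≤ U) : Even (finrank K U) := by
  have hmaps : ∀ x ∈ U, J x ∈ U := fun x hx => hU ⟨x, hx, rfl⟩
  refine (J.restrict hmaps).even_finrank_of_mul_self_eq_neg_one ?_
  ext x
  simpa using congr($hJ x)

end ComplexStructure

theorem Submodule.sup_eq_top_or_le_of_finrank_add_one {K V : Type*} [DivisionRing K]
    [AddCommGroup V] [Module K V] [FiniteDimensional K V] {U : Submodule K V}
    (hU : finrank K U + 1 = finrank K V) (W : Submodule K V) : U ⊔ W = ⊤ ∨ W ≤ U := by
  refine or_iff_not_imp_left.mpr fun hne => ?_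
  have hlt : finrank K ↥(U ⊔ W) < finrank K V := Submodule.finrank_lt hne
  have heq : U = U ⊔ W := Submodule.eq_of_le_of_finrank_le le_sup_left (by omega)
  exact heq ▸ le_sup_right

/-- Let `E` be a left `ℍ`-module of real dimension `4k`, `k ≥ 1`, and let `U ⊆ E` be a
real hyperplane (a real subspace of dimension `4k − 1`). Then `U + q • U = E` for every
unit purely imaginary quaternion `q`; that is, `(U, E)` is a CR quaternionic
vector space. -/
theorem hyperplane_is_cr_quaternionic
    (k : ℕ) (hk : 1 ≤ k)
    (E : Type*) [AddCommGroup E] [Module ℝ E] [Module ℍ[ℝ] E] [IsScalarTower ℝ ℍ[ℝ] E]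
    (hE : Module.finrank ℝ E = 4 * k)
    (U : Submodule ℝ E) (hU : Module.finrank ℝ U = 4 * k - 1)
    (q : ℍ[ℝ]) (hre : q.re = 0) (hnorm : ‖q‖ = 1) :
    U ⊔ U.map (DistribMulAction.toLinearMap ℝ E q) = ⊤ := by
  have : FiniteDimensional ℝ E := Module.finite_of_finrank_pos (by omega)
  have hJ : DistribSMul.toLinearMap ℝ E q * DistribSMul.toLinearMap ℝ E q = -1 := by
    change Module.toModuleEnd ℝ E q * Module.toModuleEnd ℝ E q = -1
    rw [← map_mul, mul_self_eq_neg_one_of_re_eq_zero_of_norm_eq_one hre hnorm, map_neg, map_one]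
  refine (U.sup_eq_top_or_le_of_finrank_add_one (by omega) _).resolve_right fun hle => ?_
  have heven := Submodule.even_finrank_of_map_le hJ hle
  rw [hU, Nat.even_iff] at heven
  omega
end

section
/- (Example 1.3) For k ≥ 1, regard ℂ ⊆ ℍ as the real span of 1 and i, and let j ∈ ℍ be the second imaginary unit. Let V_k ⊆ ℍ^k be the set of vectors v of the form v_1 = z_1, v_m = z̄_{m−1} + z_m·j for even m with 2 ≤ m ≤ k, and v_m = z_m − z̄_{m−1}·j for odd m with 3 ≤ m ≤ k, where z_1, …, z_k ∈ ℂ satisfy z̄_k = (−1)^k z_k. Let U_k = V_k^⊥ be the orthogonal complement of V_k in ℍ^k with respect to the real inner product ⟨x, y⟩ = Σ_m re(x̄_m y_m). Then for every purely imaginary q ∈ ℍ with ‖q‖ = 1, U_k + q • U_k = ℍ^k, where q • x is coordinatewise left multiplication; that is, (U_k, ℍ^k) is a CR quaternionic vector space. -/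
open Quaternion

/-- The embedding of `ℂ` in `ℍ` as the real span of `1` and `i`. -/
def cq (z : ℂ) : ℍ[ℝ] := ⟨z.re, z.im, 0, 0⟩

/-- The second imaginary unit `j` of `ℍ`. -/
def jq : ℍ[ℝ] := ⟨0, 0, 1, 0⟩

/-!
Left multiplication by a unit quaternion `q` is an isometry of `ℍ^k`, so
`U_k + q • U_k = (V_k ∩ q • V_k)^⊥` and it suffices to show `V_k ∩ q • V_k = 0`.

Write quaternions as `a + b j` with `a, b ∈ ℂ` and `q = α + β j`, where `ᾱ = -α` since `q` is
purely imaginary. If `v = q w` with `v, w ∈ V_k` given by parameters `z, y`, comparing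
coordinates gives `z₁ = α y₁`, `β ȳ₁ = 0` and, for every `n`,
`z̄ₙ = α ȳₙ - β ȳₙ₊₁`, `zₙ₊₁ = α yₙ₊₁ + β yₙ`. If `β ≠ 0` this forces `y = z = 0` inductively.
If `β = 0` then `zₙ = α yₙ` and `z̄ₙ = α ȳₙ` for all `n` (for `n = k` by the common reality
condition on `z_k` and `y_k`); as `ᾱ = -α ≠ 0`, this gives `y = 0`, hence `z = 0`.
-/

open ComplexConjugate

theorem Submodule.orthogonal_sup_map_orthogonal_eq_top_iff {𝕜 E : Type*} [RCLike 𝕜]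
    [NormedAddCommGroup E] [InnerProductSpace 𝕜 E] [FiniteDimensional 𝕜 E]
    (K : Submodule 𝕜 E) (T : E ≃ₗᵢ[𝕜] E) :
    Kᗮ ⊔ Kᗮ.map T.toLinearEquiv.toLinearMap = ⊤ ↔
      K ⊓ K.map T.toLinearEquiv.toLinearMap = ⊥ := by
  rw [map_orthogonal_equiv, ← orthogonal_eq_bot_iff, ← inf_orthogonal, orthogonal_orthogonal,
    orthogonal_orthogonal]

lemma Complex.eq_zero_of_conj_mul_eq_mul_conj {α y : ℂ} (hα : conj α = -α) (hα0 : α ≠ 0)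
    (h : conj (α * y) = α * conj y) : y = 0 := by
  rw [map_mul, hα] at h
  have : (2 * α) * conj y = 0 := by linear_combination -h
  simpa [hα0] using this

noncomputable def Quaternion.mulLeftLIE (q : ℍ[ℝ]) (hq : ‖q‖ = 1) : ℍ[ℝ] ≃ₗᵢ[ℝ] ℍ[ℝ] where
  toFun x := q * x
  invFun x := star q * x
  map_add' := mul_add q
  map_smul' r x := mul_smul_comm r q x
  left_inv x := by simp [← mul_assoc, star_mul_self, normSq_eq_norm_mul_self, hq]
  right_inv x := by simp [← mul_assoc, self_mul_star, normSq_eq_norm_mul_self, hq]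
  norm_map' x := by simp [hq]

section QuatVec

variable {ι : Type*} [Fintype ι]

noncomputable def quatVecMulLeft (q : ℍ[ℝ]) (hq : ‖q‖ = 1) :
    PiLp 2 (fun _ : ι => ℍ[ℝ]) ≃ₗᵢ[ℝ] PiLp 2 (fun _ : ι => ℍ[ℝ]) :=
  LinearIsometryEquiv.piLpCongrRight 2 fun _ => Quaternion.mulLeftLIE q hq

@[simp] lemma quatVecMulLeft_apply (q : ℍ[ℝ]) (hq : ‖q‖ = 1) (x : PiLp 2 (fun _ : ι => ℍ[ℝ]))
    (m : ι) : quatVecMulLeft q hq x m = q * x m := rfl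

lemma inner_toLp_eq_sum_re_star_mul (v x : ι → ℍ[ℝ]) :
    inner ℝ (WithLp.toLp 2 v) (WithLp.toLp 2 x) = ∑ m, (star (v m) * x m).re := by
  simp only [PiLp.inner_apply, inner_def]
  exact Finset.sum_congr rfl fun m _ => by simp [re_mul]

end QuatVec

noncomputable def cqPair (a b : ℂ) : ℍ[ℝ] := cq a + cq b * jq

section cqPair

variable (a b : ℂ)

@[simp] lemma cqPair_re : (cqPair a b).re = a.re := by simp [cqPair, re_mul]; simp [cq, jq]
@[simp] lemma cqPair_imI : (cqPair a b).imI = a.im := by simp [cqPair, imI_mul]; simp [cq, jq]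
@[simp] lemma cqPair_imJ : (cqPair a b).imJ = b.re := by simp [cqPair, imJ_mul]; simp [cq, jq]
@[simp] lemma cqPair_imK : (cqPair a b).imK = b.im := by simp [cqPair, imK_mul]; simp [cq, jq]

lemma cqPair_inj {c d : ℂ} : cqPair a b = cqPair c d ↔ a = c ∧ b = d := by
  simp [Quaternion.ext_iff, Complex.ext_iff, and_assoc]

lemma cq_eq_cqPair : cq a = cqPair a 0 := by
  ext <;> simp [cq]

lemma cqPair_mul_cqPair (α β : ℂ) :
    cqPair α β * cqPair a b = cqPair (α * a - β * conj b) (α * b + β * conj a) := by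
  ext <;> simp [re_mul, imI_mul, imJ_mul, imK_mul] <;> ring

lemma cqPair_mul_jq : cqPair a b * jq = cqPair (-b) a := by
  ext <;> simp [re_mul, imI_mul, imJ_mul, imK_mul] <;> simp [jq]

end cqPair

lemma cqPair_re_imI (q : ℍ[ℝ]) : cqPair ⟨q.re, q.imI⟩ ⟨q.imJ, q.imK⟩ = q := by
  ext <;> simp

section Recursion

variable {K : ℕ} {α β : ℂ} {z y : Fin (K + 1) → ℂ}

lemma eq_zero_of_recursion_of_ne_zero (hβ : β ≠ 0) (hz0 : z 0 = α * y 0) (hy0 : y 0 = 0)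
    (hstep : ∀ i : Fin K, conj (z i.castSucc) = α * conj (y i.castSucc) - β * conj (y i.succ) ∧
      z i.succ = α * y i.succ + β * y i.castSucc) :
    z = 0 := by
  have hyz : ∀ i, y i = 0 ∧ z i = 0 := by
    refine Fin.induction ⟨hy0, by rw [hz0, hy0, mul_zero]⟩ fun i ⟨hyi, hzi⟩ => ?_
    obtain ⟨hprev, hnext⟩ := hstep i
    have hyi' : y i.succ = 0 := by simpa [hyi, hzi, hβ] using hprev
    exact ⟨hyi', by rw [hnext, hyi', hyi]; ring⟩
  exact funext fun i => (hyz i).2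

lemma eq_zero_of_diagonal_recursion (hα : conj α = -α) (hα0 : α ≠ 0) {s : ℂ}
    (hz0 : z 0 = α * y 0)
    (hstep : ∀ i : Fin K, conj (z i.castSucc) = α * conj (y i.castSucc) ∧ z i.succ = α * y i.succ)
    (hz : conj (z (Fin.last K)) = s * z (Fin.last K))
    (hy : conj (y (Fin.last K)) = s * y (Fin.last K)) :
    z = 0 := by
  have hzy : ∀ i, z i = α * y i := Fin.cases hz0 fun i => (hstep i).2
  have hconj : ∀ i, conj (z i) = α * conj (y i) :=
    Fin.lastCases (by rw [hz, hy, hzy]; ring) fun i => (hstep i).1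
  funext i
  have hyi : y i = 0 := Complex.eq_zero_of_conj_mul_eq_mul_conj hα hα0 (hzy i ▸ hconj i)
  rw [hzy i, hyi, mul_zero, Pi.zero_apply]

end Recursion

/-- Coordinates are indexed from `0`: `vPattern z m` is the paper's `v_{m+1}`, so the paper's
even coordinates are those with `m.val` odd. -/
noncomputable def vPattern {k : ℕ} (z : Fin k → ℂ) (m : Fin k) : ℍ[ℝ] :=
  if m.val = 0 then cq (z m)
  else if m.val % 2 = 1 then
    cq (conj (z ⟨m.val - 1, (m.val.sub_le 1).trans_lt m.isLt⟩)) + cq (z m) * jq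
  else cq (z m) - cq (conj (z ⟨m.val - 1, (m.val.sub_le 1).trans_lt m.isLt⟩)) * jq

lemma vPattern_add {k : ℕ} (z z' : Fin k → ℂ) : vPattern (z + z') = vPattern z + vPattern z' := by
  funext m
  simp only [vPattern, Pi.add_apply]
  split_ifs <;> ext <;> simp [re_mul, imI_mul, imJ_mul, imK_mul] <;> simp [cq, jq] <;> ring

lemma vPattern_smul {k : ℕ} (r : ℝ) (z : Fin k → ℂ) : vPattern (r • z) = r • vPattern z := by
  funext m
  simp only [vPattern, Pi.smul_apply]
  split_ifs <;> ext <;> simp [re_mul, imI_mul, imJ_mul, imK_mul] <;> simp [cq, jq]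

noncomputable def vPatternₗ (k : ℕ) : (Fin k → ℂ) →ₗ[ℝ] PiLp 2 (fun _ : Fin k => ℍ[ℝ]) where
  toFun z := WithLp.toLp 2 (vPattern z)
  map_add' z z' := by rw [vPattern_add, WithLp.toLp_add]
  map_smul' r z := by rw [vPattern_smul, WithLp.toLp_smul]; rfl

def conjEqMulSubmodule {ι : Type*} (i : ι) (s : ℂ) : Submodule ℝ (ι → ℂ) where
  carrier := {z | conj (z i) = s * z i}
  add_mem' hz hz' := by simp_all [mul_add]
  zero_mem' := by simp
  smul_mem' r z hz := by simp_all [Complex.real_smul, mul_left_comm]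

/-- The paper's `V_k` for `k = K + 1`. -/
noncomputable def vSubmodule (K : ℕ) : Submodule ℝ (PiLp 2 fun _ : Fin (K + 1) => ℍ[ℝ]) :=
  (conjEqMulSubmodule (Fin.last K) ((-1) ^ (K + 1))).map (vPatternₗ (K + 1))

section vPattern

variable {K : ℕ} (z : Fin (K + 1) → ℂ)

lemma vPattern_zero : vPattern z 0 = cqPair (z 0) 0 := by
  simp [vPattern, cq_eq_cqPair]

lemma vPattern_succ (i : Fin K) :
    vPattern z i.succ = if i.val % 2 = 0 then cqPair (conj (z i.castSucc)) (z i.succ)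
      else cqPair (conj (z i.castSucc)) (z i.succ) * -jq := by
  have hprev : (⟨i.val + 1 - 1, by omega⟩ : Fin (K + 1)) = i.castSucc := Fin.ext (by simp)
  have hpar : (i.val + 1) % 2 = 1 ↔ i.val % 2 = 0 := by omega
  simp only [vPattern, Fin.val_succ, hprev, hpar, Nat.add_one_ne_zero, if_false]
  split_ifs
  · rfl
  · rw [mul_neg, cqPair_mul_jq]
    ext <;> simp [re_mul, imI_mul, imJ_mul, imK_mul] <;> simp [cq, jq]

end vPattern

/-- Right multiplication by `-jq` commutes with left multiplication by `q`, so both parities of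
coordinates yield the same equation. -/
lemma cqPair_eq_mul_of_vPattern_succ_eq_mul {K : ℕ} {q : ℍ[ℝ]} {z y : Fin (K + 1) → ℂ}
    (i : Fin K) (h : vPattern z i.succ = q * vPattern y i.succ) :
    cqPair (conj (z i.castSucc)) (z i.succ) = q * cqPair (conj (y i.castSucc)) (y i.succ) := by
  rw [vPattern_succ, vPattern_succ] at h
  split_ifs at h
  · exact h
  · have hj : -jq ≠ 0 := neg_ne_zero.mpr fun hj => one_ne_zero (congrArg QuaternionAlgebra.imJ hj)
    exact mul_right_cancel₀ hj (h.trans (mul_assoc _ _ _).symm)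

theorem eq_zero_of_vPattern_eq_mul {K : ℕ} {q : ℍ[ℝ]} (hre : q.re = 0) (hq : q ≠ 0) {s : ℂ}
    {z y : Fin (K + 1) → ℂ} (hz : conj (z (Fin.last K)) = s * z (Fin.last K))
    (hy : conj (y (Fin.last K)) = s * y (Fin.last K)) (h : ∀ m, vPattern z m = q * vPattern y m) :
    z = 0 := by
  set α : ℂ := ⟨q.re, q.imI⟩
  set β : ℂ := ⟨q.imJ, q.imK⟩
  have hqαβ : q = cqPair α β := (cqPair_re_imI q).symm
  have hα : conj α = -α := Complex.ext (by simp [α, hre]) (by simp [α])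
  have h0 : z 0 = α * y 0 ∧ 0 = β * conj (y 0) := by
    simpa [vPattern_zero, hqαβ, cqPair_mul_cqPair, cqPair_inj] using h 0
  have hstep (i : Fin K) : conj (z i.castSucc) = α * conj (y i.castSucc) - β * conj (y i.succ) ∧
      z i.succ = α * y i.succ + β * y i.castSucc := by
    simpa [hqαβ, cqPair_mul_cqPair, cqPair_inj] using
      cqPair_eq_mul_of_vPattern_succ_eq_mul i (h i.succ)
  rcases eq_or_ne β 0 with hβ | hβ
  · have hα0 : α ≠ 0 := by
      rintro hα0
      exact hq (by rw [hqαβ, hα0, hβ]; ext <;> simp)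
    exact eq_zero_of_diagonal_recursion hα hα0 h0.1 (by simpa [hβ] using hstep) hz hy
  · exact eq_zero_of_recursion_of_ne_zero hβ h0.1 (by simpa [hβ] using h0.2.symm) hstep

theorem vSubmodule_inf_map_quatVecMulLeft_eq_bot (K : ℕ) {q : ℍ[ℝ]} (hre : q.re = 0)
    (hq : ‖q‖ = 1) :
    vSubmodule K ⊓ (vSubmodule K).map (quatVecMulLeft q hq).toLinearEquiv.toLinearMap = ⊥ := by
  rw [eq_bot_iff]
  rintro _ ⟨⟨z, hz, rfl⟩, _, ⟨y, hy, rfl⟩, hzy⟩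
  have hq0 : q ≠ 0 := norm_ne_zero_iff.mp (hq ▸ one_ne_zero)
  have : z = 0 := eq_zero_of_vPattern_eq_mul hre hq0 hz hy fun m => (congrArg (· m) hzy).symm
  simp [this]

/-- (Example 1.3) For `k ≥ 1`, let `V_k ⊆ ℍ^k` consist of the vectors
`(z₁, z̄₁ + z₂·j, z₃ − z̄₂·j, …)` with `z₁, …, z_k ∈ ℂ` and `z̄_k = (−1)^k z_k`, and let
`U_k = V_k^⊥` with respect to the canonical real inner product on `ℍ^k`. Then
`U_k + q • U_k = ℍ^k` for every unit purely imaginary quaternion `q`; that is,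
`(U_k, ℍ^k)` is a CR quaternionic vector space. -/
theorem example_Uk_is_cr_quaternionic
    (k : ℕ) (hk : 1 ≤ k)
    (V : Set (Fin k → ℍ[ℝ]))
    (hV : V = {v | ∃ z : Fin k → ℂ,
      (starRingEnd ℂ) (z ⟨k - 1, by omega⟩) = (-1 : ℂ) ^ k * z ⟨k - 1, by omega⟩ ∧
      ∀ m : Fin k, v m =
        if m.val = 0 then cq (z m)
        else if m.val % 2 = 1 then
          cq ((starRingEnd ℂ) (z ⟨m.val - 1, by omega⟩)) + cq (z m) * jq
        else
          cq (z m) - cq ((starRingEnd ℂ) (z ⟨m.val - 1, by omega⟩)) * jq})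
    (U : Set (Fin k → ℍ[ℝ]))
    (hU : U = {x | ∀ v ∈ V, (∑ m : Fin k, (star (v m) * x m).re) = 0})
    (q : ℍ[ℝ]) (hre : q.re = 0) (hnorm : ‖q‖ = 1) :
    ∀ w : Fin k → ℍ[ℝ], ∃ u u' : Fin k → ℍ[ℝ], u ∈ U ∧ u' ∈ U ∧ w = u + q • u' := by
  obtain ⟨K, rfl⟩ : ∃ K, k = K + 1 := ⟨k - 1, by omega⟩
  have hV' (v : Fin (K + 1) → ℍ[ℝ]) : v ∈ V ↔ WithLp.toLp 2 v ∈ vSubmodule K := by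
    rw [hV, vSubmodule, Submodule.mem_map]
    refine exists_congr fun z => and_congr Iff.rfl ⟨fun h => ?_, fun h m => ?_⟩
    · exact congrArg (WithLp.toLp 2) (funext h).symm
    · exact (congrArg (· m) h).symm
  have hU' (x : Fin (K + 1) → ℍ[ℝ]) : x ∈ U ↔ WithLp.toLp 2 x ∈ (vSubmodule K)ᗮ := by
    simp only [hU, Set.mem_ofPred_eq, Submodule.mem_orthogonal, hV',
      ← inner_toLp_eq_sum_re_star_mul]
    exact ⟨fun h u hu => h u.ofLp hu, fun h v hv => h _ hv⟩
  have hsup := (Submodule.orthogonal_sup_map_orthogonal_eq_top_iff (vSubmodule K)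
    (quatVecMulLeft q hnorm)).mpr (vSubmodule_inf_map_quatVecMulLeft_eq_bot K hre hnorm)
  intro w
  obtain ⟨u, hu, _, ⟨u', hu', rfl⟩, hw⟩ :=
    Submodule.mem_sup.mp (Submodule.eq_top_iff'.mp hsup (WithLp.toLp 2 w))
  refine ⟨u.ofLp, u'.ofLp, (hU' _).mpr hu, (hU' _).mpr hu', funext fun m => ?_⟩
  simpa using (congrArg (· m) hw).symm
end
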